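/- arXiv:2002.08337 — 3 statements merged into one kernel-verified Lean document; each statement's English description precedes it below -/
import Mathlib

section
/- For any finite non-empty connected subset C of Z^2 which does not touch the boundary of the box Λ(n), the external edge boundary of C (the edges connecting C to the infinite component of its complement) has cardinality at least 1 + diam(C), which is at least sqrt(|C|). -/
open scoped Classical BigOperators

noncomputable section

/-- Vertices of the square lattice `ℤ²`. -/
abbrev V : Type := ℤ × ℤ

/-- Nearest-neighbour adjacency on `ℤ²` (ℓ¹-distance one). -/
def adjV (x y : V) : Prop := (x.1 - y.1).natAbs + (x.2 - y.2).natAbs = 1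

/-- The box `Λ(n) = [-n/2, n/2)² ∩ ℤ²` of side `n`. -/
def Lam (n : ℕ) : Finset V :=
  (Finset.Ico (-((n : ℤ) / 2)) ((n : ℤ) - (n : ℤ) / 2)) ×ˢ
    (Finset.Ico (-((n : ℤ) / 2)) ((n : ℤ) - (n : ℤ) / 2))

/-- The (interior) boundary `∂Λ(n)` of the box. -/
def bdry (n : ℕ) : Finset V :=
  (Lam n).filter fun x => ∃ y : V, adjV x y ∧ y ∉ Lam n

/-- Connectivity in the complement of `C`. -/
def connAvoid (C : Finset V) (x y : V) : Prop :=
  Relation.ReflTransGen (fun a b => adjV a b ∧ a ∉ C ∧ b ∉ C) x y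

/-- The infinite connected component of the complement of `C`. -/
def infComp (C : Finset V) : Set V :=
  {y | y ∉ C ∧ {z : V | connAvoid C y z}.Infinite}

/-- The external edge boundary `∂^ext C`: edges joining `C` to the infinite
component of its complement. -/
def extBdryE (C : Finset V) : Set (Sym2 V) :=
  {e | ∃ x y : V, e = s(x, y) ∧ adjV x y ∧ x ∈ C ∧ y ∈ infComp C}

/-- The ℓ∞-diameter of a finite set of vertices. -/
def diamF (C : Finset V) : ℕ :=
  C.sup fun x => C.sup fun y => max (x.1 - y.1).natAbs (x.2 - y.2).natAbs

/-- `C` is a connected set of vertices (for nearest-neighbour adjacency). -/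
def FinConnected (C : Finset V) : Prop :=
  ∀ x ∈ C, ∀ y ∈ C,
    Relation.ReflTransGen (fun a b => adjV a b ∧ a ∈ C ∧ b ∈ C) x y

/-!
Every column of `ℤ²` that meets `C` contributes the edge from its topmost vertex in `C` to the
vertex above it, whose upward ray avoids `C` and so lies in the infinite component of the
complement. If `p, q ∈ C` realise the diameter in the first coordinate, connectedness of `C`
makes it meet the `1 + diam C` columns between them, giving that many distinct edges of
`∂^ext C`; the second coordinate is handled by the same argument with the axes swapped.
Finally `C` lies in a square of side `1 + diam C`, so `|C| ≤ (1 + diam C)²`.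
-/

open Function

lemma Relation.ReflTransGen.exists_mem_eq_of_le {α : Type*} {r : α → α → Prop} {S : Set α}
    (f : α → ℤ) (hS : ∀ a b, r a b → b ∈ S) (hf : ∀ a b, r a b → f b ≤ f a + 1)
    {x y : α} (hx : x ∈ S) (h : Relation.ReflTransGen r x y) {k : ℤ}
    (hxk : f x ≤ k) (hky : k ≤ f y) : ∃ z ∈ S, f z = k := by
  induction h with
  | refl => exact ⟨x, hx, le_antisymm hxk hky⟩
  | @tail b c _ hbc ih =>
    by_cases hk : k ≤ f b
    · exact ih hk
    · exact ⟨c, hS b c hbc, by linarith [hf b c hbc]⟩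

lemma extBdryE_finite (C : Finset V) : (extBdryE C).Finite := by
  let N := C.biUnion fun x => Finset.Icc (x - (1, 1)) (x + (1, 1))
  refine (((C ×ˢ N).image fun p => s(p.1, p.2)).finite_toSet).subset ?_
  rintro _ ⟨x, y, rfl, hxy, hx, -⟩
  have hy : y ∈ Finset.Icc (x - (1, 1)) (x + (1, 1)) := by
    simp only [adjV] at hxy
    simp only [Finset.mem_Icc, Prod.le_def, Prod.fst_sub, Prod.snd_sub, Prod.fst_add,
      Prod.snd_add]
    omega
  exact Finset.mem_coe.2 (Finset.mem_image.2
    ⟨(x, y), Finset.mem_product.2 ⟨hx, Finset.mem_biUnion.2 ⟨x, hx, hy⟩⟩, rfl⟩)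

lemma mem_infComp_of_path {C : Finset V} (f : ℕ → V) (hf : Injective f)
    (hadj : ∀ m, adjV (f m) (f (m + 1))) (hC : ∀ m, f m ∉ C) : f 0 ∈ infComp C := by
  refine ⟨hC 0, (Set.infinite_range_of_injective hf).mono ?_⟩
  rintro _ ⟨m, rfl⟩
  induction m with
  | zero => exact Relation.ReflTransGen.refl
  | succ m ih => exact ih.tail ⟨hadj m, hC m, hC (m + 1)⟩

lemma exists_mem_extBdryE_of_line {C : Finset V} (ℓ : ℤ → V) (hℓ : Injective ℓ)
    (hadj : ∀ t, adjV (ℓ t) (ℓ (t + 1))) (hmeet : ∃ t, ℓ t ∈ C) :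
    ∃ t, s(ℓ t, ℓ (t + 1)) ∈ extBdryE C := by
  obtain ⟨t₀, ht₀⟩ := hmeet
  obtain ⟨t, ht, htmax⟩ := (C.preimage ℓ hℓ.injOn).exists_max_image id
    ⟨t₀, Finset.mem_preimage.2 ht₀⟩
  have hray : ℓ (t + 1) ∈ infComp C := by
    have := mem_infComp_of_path (C := C) (fun m : ℕ => ℓ (t + 1 + m))
      (fun a b hab => by simpa using hℓ hab)
      (fun m => by simpa [add_assoc] using hadj (t + 1 + m))
      (fun m hm => by have := htmax _ (Finset.mem_preimage.2 hm); simp only [id_eq] at this; omega)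
    simpa using this
  exact ⟨t, ℓ t, ℓ (t + 1), rfl, hadj t, Finset.mem_preimage.1 ht, hray⟩

lemma natAbs_add_one_le_ncard_extBdryE (e : V ≃ V) (he : ∀ x y, adjV (e x) (e y) ↔ adjV x y)
    {C : Finset V} (hconn : FinConnected C) {p q : V} (hp : p ∈ C) (hq : q ∈ C) :
    ((e.symm p).1 - (e.symm q).1).natAbs + 1 ≤ (extBdryE C).ncard := by
  wlog hpq : (e.symm q).1 ≤ (e.symm p).1 generalizing p q
  · have := this hq hp (by omega)
    omega
  let col : V → ℤ := fun z => (e.symm z).1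
  have hcol : ∀ a b, adjV a b → col b ≤ col a + 1 := by
    intro a b hab
    rw [← e.apply_symm_apply a, ← e.apply_symm_apply b, he, adjV] at hab
    simp only [col]
    omega
  have hedge : ∀ k ∈ Finset.Icc (col q) (col p),
      ∃ t, s(e (k, t), e (k, t + 1)) ∈ extBdryE C := by
    intro k hk
    rw [Finset.mem_Icc] at hk
    obtain ⟨z, hz, rfl⟩ := (hconn q hq p hp).exists_mem_eq_of_le (S := ↑C) col
      (fun _ _ h => h.2.2) (fun a b h => hcol a b h.1) hq hk.1 hk.2
    refine exists_mem_extBdryE_of_line _ (e.injective.comp (Prod.mk_right_injective _))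
      (fun t => (he _ _).2 (by simp [adjV])) ⟨(e.symm z).2, by simpa [col] using hz⟩
  choose! τ hτ using hedge
  let edge : ℤ → Sym2 V := fun k => s(e (k, τ k), e (k, τ k + 1))
  have hinj : Set.InjOn edge (Finset.Icc (col q) (col p)) := by
    intro k _ k' _ hkk'
    have hmem : e (k, τ k) ∈ edge k' := hkk' ▸ Sym2.mem_mk_left _ _
    rcases Sym2.mem_iff.1 hmem with h | h <;> simpa using congrArg Prod.fst (e.injective h)
  calc ((e.symm p).1 - (e.symm q).1).natAbs + 1
      = ((Finset.Icc (col q) (col p)).image edge).card := by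
        rw [Finset.card_image_of_injOn hinj, Int.card_Icc]
        simp only [col]
        omega
    _ ≤ (extBdryE C).ncard := by
        rw [← Set.ncard_coe_finset]
        refine Set.ncard_le_ncard ?_ (extBdryE_finite C)
        rw [Finset.coe_image]
        rintro _ ⟨k, hk, rfl⟩
        exact hτ k hk

lemma natAbs_sub_le_diamF {C : Finset V} {x y : V} (hx : x ∈ C) (hy : y ∈ C) :
    max (x.1 - y.1).natAbs (x.2 - y.2).natAbs ≤ diamF C :=
  (Finset.le_sup (f := fun y => max (x.1 - y.1).natAbs (x.2 - y.2).natAbs) hy).trans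
    (Finset.le_sup (f := fun x => C.sup fun y => max (x.1 - y.1).natAbs (x.2 - y.2).natAbs) hx)

lemma exists_diamF_eq {C : Finset V} (hne : C.Nonempty) :
    ∃ p ∈ C, ∃ q ∈ C, diamF C = max (p.1 - q.1).natAbs (p.2 - q.2).natAbs := by
  obtain ⟨p, hp, hp'⟩ := C.exists_mem_eq_sup hne
    fun x => C.sup fun y => max (x.1 - y.1).natAbs (x.2 - y.2).natAbs
  obtain ⟨q, hq, hq'⟩ := C.exists_mem_eq_sup hne
    fun y => max (p.1 - y.1).natAbs (p.2 - y.2).natAbs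
  exact ⟨p, hp, q, hq, by rw [diamF, hp', hq']⟩

lemma Finset.card_le_of_forall_sub_le {s : Finset ℤ} {D : ℕ}
    (h : ∀ x ∈ s, ∀ y ∈ s, x - y ≤ D) : s.card ≤ D + 1 := by
  rcases s.eq_empty_or_nonempty with rfl | hs
  · simp
  have hsub : s ⊆ Finset.Icc (s.min' hs) (s.min' hs + D) := fun x hx =>
    Finset.mem_Icc.2 ⟨s.min'_le x hx, by linarith [h x hx _ (s.min'_mem hs)]⟩
  calc s.card ≤ (Finset.Icc (s.min' hs) (s.min' hs + D)).card := Finset.card_le_card hsub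
    _ = D + 1 := by rw [Int.card_Icc]; omega

lemma card_le_sq_diamF (C : Finset V) : C.card ≤ (diamF C + 1) ^ 2 := by
  have hproj : ∀ f : V → ℤ, (∀ x ∈ C, ∀ y ∈ C, f x - f y ≤ diamF C) →
      (C.image f).card ≤ diamF C + 1 := by
    intro f hf
    refine Finset.card_le_of_forall_sub_le ?_
    simp only [Finset.mem_image]
    rintro _ ⟨x, hx, rfl⟩ _ ⟨y, hy, rfl⟩
    exact hf x hx y hy
  have hfst := hproj Prod.fst fun x hx y hy => by have := natAbs_sub_le_diamF hx hy; omega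
  have hsnd := hproj Prod.snd fun x hx y hy => by have := natAbs_sub_le_diamF hx hy; omega
  calc C.card ≤ (C.image Prod.fst ×ˢ C.image Prod.snd).card :=
        Finset.card_le_card Finset.subset_product
    _ ≤ (diamF C + 1) ^ 2 := by rw [Finset.card_product, sq]; exact Nat.mul_le_mul hfst hsnd

theorem stmt0_general (C : Finset V) (hne : C.Nonempty) (hconn : FinConnected C) :
    Real.sqrt C.card ≤ 1 + diamF C ∧
      ((1 + diamF C : ℝ) ≤ (extBdryE C).ncard) := by
  refine ⟨Real.sqrt_le_iff.2 ⟨by positivity, ?_⟩, ?_⟩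
  · rw [add_comm]
    exact_mod_cast card_le_sq_diamF C
  obtain ⟨p, hp, q, hq, hdiam⟩ := exists_diamF_eq hne
  have hbound : diamF C + 1 ≤ (extBdryE C).ncard := by
    rcases max_choice (p.1 - q.1).natAbs (p.2 - q.2).natAbs with h | h <;> rw [hdiam, h]
    · exact natAbs_add_one_le_ncard_extBdryE (Equiv.refl V) (fun _ _ => Iff.rfl) hconn hp hq
    · exact natAbs_add_one_le_ncard_extBdryE (Equiv.prodComm ℤ ℤ)
        (fun x y => by simp only [adjV, Equiv.prodComm_apply, Prod.fst_swap, Prod.snd_swap]; omega)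
        hconn hp hq
  rw [add_comm]
  exact_mod_cast hbound

/-- For any finite nonempty connected `C ⊆ Λ(n)` not touching the boundary of the box,
the external edge boundary of `C` has cardinality at least `1 + diam C`, which is at
least `√|C|`. -/
theorem stmt0 (n : ℕ) (C : Finset V) (hne : C.Nonempty) (hconn : FinConnected C)
    (hsub : C ⊆ Lam n) (hbd : ∀ x ∈ C, x ∉ bdry n) :
    Real.sqrt C.card ≤ 1 + diamF C ∧
      ((1 + diamF C : ℝ) ≤ (extBdryE C).ncard) :=
  stmt0_general C hne hconn
end
end

section
/- Let N ≥ 1 and let ε_1,...,ε_M be i.i.d. uniform random signs in {-1,+1} attached to clusters, with weights a_1,...,a_M each satisfying 1 ≤ a_i ≤ N. Suppose the weighted sum S = Σ a_i ε_i is considered, and sort indices by weight. Then for each j, conditionally on the partial sum over weights ≤ j-1 lying in [-N, N], the probability that the partial sum over weights ≤ j lies in [-N, N] is at least K_2/(2n), provided the number of weight-j indices is at most 2n, where K_2 is a constant with C(2k,k)/4^k ≥ K_2/sqrt(2k) for all k ≥ 1. Consequently P(|S| ≤ N) ≥ (K_2/(2n))^N. -/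
/-!
Adding the terms of weight `j` to a partial sum `s ∈ [-N, N]` keeps it in `[-N, N]` as soon as
the `m` signs of weight `j` are balanced: exactly when `m` is even, and with the one surplus
sign opposite to `s` when `m` is odd. Such sign patterns number `C(m, ⌊m/2⌋)`, which is at least
`(K₂ / 2n) 2^m` by the lower bound on central binomial coefficients. The partial sum over smaller
weights does not see the signs of weight `j`, so this bound holds conditionally on it, and the
conditional bounds for `j = 1, …, N` multiply.
-/

open scoped Classical BigOperators

noncomputable section

/-- The partial weighted sum of signs over the indices whose weight is at most `j`. -/
def Spart (M : ℕ) (a : Fin M → ℕ) (j : ℕ) (ε : Fin M → Bool) : ℤ :=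
  ∑ i ∈ Finset.univ.filter (fun i => a i ≤ j), (a i : ℤ) * (if ε i then 1 else -1)

open Finset

section SignPatterns

variable {ι : Type*} [Fintype ι] [DecidableEq ι]

theorem sum_sign_mem (S : Finset ι) :
    ∑ i, (if i ∈ S then (1 : ℤ) else -1) = 2 * #S - Fintype.card ι := by
  rw [← sum_add_sum_compl S, sum_ite_of_true fun _ h => h,
    sum_ite_of_false fun _ h => mem_compl.1 h]
  simp only [sum_const, Int.nsmul_eq_mul, mul_one, Int.reduceNeg, card_compl]
  rw [Nat.cast_sub (card_le_univ S)]
  ring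

theorem choose_le_card_filter_sum_sign (P : ℤ → Prop) [DecidablePred P] {t : ℕ}
    (ht : P (2 * t - Fintype.card ι)) :
    (Fintype.card ι).choose t ≤ #{f : ι → Bool | P (∑ i, if f i then 1 else -1)} := by
  rw [← card_univ, ← card_powersetCard]
  refine card_le_card_of_injOn (fun S i => decide (i ∈ S)) (fun S hS => ?_) fun S _ T _ h => ?_
  · rw [mem_coe, mem_powersetCard] at hS
    simpa [hS, sum_sign_mem] using ht
  · ext i
    simpa using congrFun h i

theorem exists_choose_eq_choose_half_abs_add_le (m : ℕ) {s j N : ℤ} (hs : |s| ≤ N) (hj : 0 ≤ j)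
    (hjN : j ≤ N) : ∃ t : ℕ, m.choose t = m.choose (m / 2) ∧ |s + j * (2 * t - m)| ≤ N := by
  obtain ⟨r, rfl | rfl⟩ := Nat.even_or_odd' m
  · exact ⟨r, by rw [Nat.mul_div_cancel_left r two_pos], by simpa using hs⟩
  · rw [show (2 * r + 1) / 2 = r by omega]
    rw [abs_le] at hs
    rcases le_or_gt s 0 with hs_nonpos | hs_pos
    · refine ⟨r + 1, Nat.choose_symm_half r, ?_⟩
      rw [abs_le]
      push_cast
      constructor <;> linarith
    · refine ⟨r, rfl, ?_⟩
      rw [abs_le]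
      push_cast
      constructor <;> linarith

theorem choose_half_le_card_filter_abs_add_le {s j N : ℤ} (hs : |s| ≤ N) (hj : 0 ≤ j)
    (hjN : j ≤ N) :
    (Fintype.card ι).choose (Fintype.card ι / 2) ≤
      #{f : ι → Bool | |s + j * ∑ i, (if f i then 1 else -1)| ≤ N} := by
  obtain ⟨t, ht, hbalanced⟩ := exists_choose_eq_choose_half_abs_add_le (Fintype.card ι) hs hj hjN
  exact ht ▸ choose_le_card_filter_sum_sign (fun σ => |s + j * σ| ≤ N) hbalanced

end SignPatterns

theorem mul_two_pow_le_choose_half {c : ℝ} (m : ℕ) (hc : c ≤ 1)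
    (hcentral : ∀ k, 1 ≤ k → 2 * k ≤ m + 1 → c * 4 ^ k ≤ (2 * k).choose k) :
    c * 2 ^ m ≤ m.choose (m / 2) := by
  obtain ⟨r, rfl | rfl⟩ := Nat.even_or_odd' m
  · rw [Nat.mul_div_cancel_left r two_pos, pow_mul, show (2 : ℝ) ^ 2 = 4 by norm_num]
    rcases Nat.eq_zero_or_pos r with rfl | hr
    · simpa using hc
    · exact hcentral r hr (by omega)
  · have hpascal : (2 * (r + 1)).choose (r + 1) = 2 * (2 * r + 1).choose r := by
      rw [show 2 * (r + 1) = 2 * r + 1 + 1 by ring, Nat.choose_succ_succ, Nat.choose_symm_half]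
      ring
    have h := hcentral (r + 1) (by omega) (by omega)
    rw [hpascal, Nat.cast_mul, Nat.cast_two, pow_succ] at h
    rw [show (2 * r + 1) / 2 = r by omega, pow_succ, pow_mul, show (2 : ℝ) ^ 2 = 4 by norm_num]
    linarith

theorem div_mul_four_pow_le_choose {K : ℝ} {n k : ℕ} (hK : 0 ≤ K) (hk : 1 ≤ k) (hkn : k ≤ n)
    (hKbin : K / √(2 * k) ≤ (2 * k).choose k / 4 ^ k) :
    K / (2 * n) * 4 ^ k ≤ (2 * k).choose k := by
  have hk' : (1 : ℝ) ≤ k := by exact_mod_cast hk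
  have hkn' : (k : ℝ) ≤ n := by exact_mod_cast hkn
  have hsqrt : √(2 * k) ≤ 2 * n := (Real.sqrt_le_left (by positivity)).2 (by nlinarith)
  calc K / (2 * n) * 4 ^ k ≤ K / √(2 * k) * 4 ^ k := by gcongr
    _ ≤ (2 * k).choose k := (le_div_iff₀ (by positivity)).1 hKbin

theorem mul_card_filter_snd_le {β γ : Type*} [Fintype β] [Fintype γ] {c : ℝ} (Q : γ → Prop)
    (R : β → γ → Prop) [DecidablePred Q] [∀ y, DecidablePred (R · y)]
    (h : ∀ y, Q y → c * Fintype.card β ≤ #{x | R x y}) :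
    c * #{p : β × γ | Q p.2} ≤ #{p : β × γ | R p.1 p.2 ∧ Q p.2} := by
  simp only [card_filter, Nat.cast_sum, mul_sum, Fintype.sum_prod_type_right]
  refine sum_le_sum fun y _ => ?_
  by_cases hy : Q y
  · simpa [hy, ← card_filter, mul_comm] using h y hy
  · simp [hy]

namespace Spart

variable {M : ℕ} (a : Fin M → ℕ)

theorem eq_zero (ha : ∀ i, 1 ≤ a i) (ε : Fin M → Bool) : Spart M a 0 ε = 0 := by
  refine sum_eq_zero fun i hi => ?_
  have := ha i
  simp only [nonpos_iff_eq_zero, mem_filter, mem_univ, true_and] at hi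
  omega

theorem congr_of_le {k : ℕ} {ε ε' : Fin M → Bool} (h : ∀ i, a i ≤ k → ε i = ε' i) :
    Spart M a k ε = Spart M a k ε' :=
  sum_congr rfl fun i hi => by rw [h i (mem_filter.1 hi).2]

theorem succ_eq (k : ℕ) (ε : Fin M → Bool) :
    Spart M a (k + 1) ε = Spart M a k ε +
      (k + 1 : ℤ) * ∑ i : {i // a i = k + 1}, (if ε i then 1 else -1) := by
  have hsplit : univ.filter (fun i => a i ≤ k + 1) =
      univ.filter (fun i => a i ≤ k) ∪ univ.filter (fun i => a i = k + 1) := by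
    ext i
    simp only [mem_filter, mem_univ, true_and, mem_union]
    omega
  have hdisj : Disjoint (univ.filter fun i => a i ≤ k) (univ.filter fun i => a i = k + 1) :=
    disjoint_filter.2 fun i _ h => by omega
  rw [Spart, hsplit, sum_union hdisj, ← Spart, mul_sum, ← sum_subtype_eq_sum_filter]
  congr 1
  refine sum_congr (by ext; simp) fun i _ => ?_
  rw [i.2]
  push_cast
  rfl

theorem mul_card_le_card_filter_succ {N k : ℕ} (hk : k + 1 ≤ N) {c : ℝ}
    (hc : c * 2 ^ Fintype.card {i // a i = k + 1} ≤
      (Fintype.card {i // a i = k + 1}).choose (Fintype.card {i // a i = k + 1} / 2)) :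
    c * #{ε : Fin M → Bool | |Spart M a k ε| ≤ N} ≤
      #{ε : Fin M → Bool | |Spart M a (k + 1) ε| ≤ N ∧ |Spart M a k ε| ≤ N} := by
  let e := Equiv.piEquivPiSubtypeProd (fun i => a i = k + 1) fun _ => Bool
  let past (g : {i // ¬a i = k + 1} → Bool) : ℤ := Spart M a k (e.symm (fun _ => true, g))
  have hpast : ∀ x, Spart M a k (e.symm x) = past x.2 := fun x =>
    congr_of_le a fun i hi => by
      simp [e, Equiv.piEquivPiSubtypeProd_symm_apply, show ¬a i = k + 1 by omega]
  have hsucc : ∀ x, Spart M a (k + 1) (e.symm x) =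
      past x.2 + (k + 1 : ℤ) * ∑ i, (if x.1 i then 1 else -1) := fun x => by
    rw [succ_eq, hpast]
    congr
    ext i
    simp [e, Equiv.piEquivPiSubtypeProd_symm_apply, i.2]
  rw [← card_equiv e.symm (s := univ.filter fun x => |past x.2| ≤ N) (by simp [hpast]),
    ← card_equiv e.symm (s := univ.filter fun x =>
      |past x.2 + (k + 1 : ℤ) * ∑ i, (if x.1 i then 1 else -1)| ≤ N ∧ |past x.2| ≤ N)
      (by simp [hpast, hsucc])]
  refine mul_card_filter_snd_le (fun g => |past g| ≤ N)
    (fun (f : {i // a i = k + 1} → Bool) g =>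
      |past g + (k + 1 : ℤ) * ∑ i, (if f i then 1 else -1)| ≤ N) fun g hg => ?_
  rw [Fintype.card_fun, Fintype.card_bool, Nat.cast_pow, Nat.cast_two]
  have hj : (k + 1 : ℤ) ≤ N := by exact_mod_cast hk
  exact hc.trans (Nat.cast_le.2 (choose_half_le_card_filter_abs_add_le hg (by positivity) hj))

end Spart

theorem stmt2_general (n N M : ℕ) (hn : 1 ≤ n)
    (a : Fin M → ℕ) (ha : ∀ i, 1 ≤ a i ∧ a i ≤ N)
    (hcount : ∀ j : ℕ, (Finset.univ.filter fun i => a i = j).card ≤ 2 * n)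
    (K₂ : ℝ) (hK₂0 : 0 < K₂) (hK₂1 : K₂ < 1)
    (hKbin : ∀ k : ℕ, 1 ≤ k →
      K₂ / Real.sqrt (2 * k) ≤ (Nat.choose (2 * k) k : ℝ) / 4 ^ k) :
    (∀ j : ℕ, 1 ≤ j → j ≤ N →
      (K₂ / (2 * n)) *
          ((Finset.univ.filter fun ε : Fin M → Bool =>
              |Spart M a (j - 1) ε| ≤ (N : ℤ)).card : ℝ)
        ≤ ((Finset.univ.filter fun ε : Fin M → Bool =>
              |Spart M a j ε| ≤ (N : ℤ) ∧ |Spart M a (j - 1) ε| ≤ (N : ℤ)).card : ℝ)) ∧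
    (K₂ / (2 * n)) ^ N * 2 ^ M ≤
      ((Finset.univ.filter fun ε : Fin M → Bool =>
          |Spart M a N ε| ≤ (N : ℤ)).card : ℝ) := by
  set c := K₂ / (2 * n)
  have hn' : (1 : ℝ) ≤ n := by exact_mod_cast hn
  have hc_le_one : c ≤ 1 := (div_le_one (by positivity)).2 (by linarith)
  have step : ∀ k, k + 1 ≤ N →
      c * #{ε : Fin M → Bool | |Spart M a k ε| ≤ N} ≤
        #{ε : Fin M → Bool | |Spart M a (k + 1) ε| ≤ N ∧ |Spart M a k ε| ≤ N} := fun k hk =>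
    Spart.mul_card_le_card_filter_succ a hk <| mul_two_pow_le_choose_half _ hc_le_one
      fun k' hk' hk'm => div_mul_four_pow_le_choose hK₂0.le hk'
        (by have := hcount (k + 1); rw [Fintype.card_subtype] at hk'm; omega) (hKbin k' hk')
  refine ⟨fun j hj hjN => ?_, ?_⟩
  · obtain ⟨k, rfl⟩ := Nat.exists_eq_add_of_le' hj
    simpa using step k hjN
  · have hbase : (#{ε : Fin M → Bool | |Spart M a 0 ε| ≤ N} : ℝ) = 2 ^ M := by
      simp [Spart.eq_zero a fun i => (ha i).1]
    rw [← hbase]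
    refine geom_le (u := fun k => (#{ε : Fin M → Bool | |Spart M a k ε| ≤ N} : ℝ))
      (by positivity) N fun k hk => (step k hk).trans ?_
    exact_mod_cast card_le_card (monotone_filter_right _ fun _ _ => And.left)

/-- Weighted sums of i.i.d. uniform signs with integer weights `1 ≤ a_i ≤ N`, at most `2n`
indices of each weight.  Conditionally on the partial sum over weights `≤ j-1` lying in
`[-N, N]`, the partial sum over weights `≤ j` lies in `[-N, N]` with probability at least
`K₂/(2n)` (stated multiplicatively via counts of sign configurations); consequently
`P(|S| ≤ N) ≥ (K₂/(2n))^N`. -/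
theorem stmt2 (n N M : ℕ) (hn : 1 ≤ n) (hN : 1 ≤ N)
    (a : Fin M → ℕ) (ha : ∀ i, 1 ≤ a i ∧ a i ≤ N)
    (hcount : ∀ j : ℕ, (Finset.univ.filter fun i => a i = j).card ≤ 2 * n)
    (K₂ : ℝ) (hK₂0 : 0 < K₂) (hK₂1 : K₂ < 1)
    (hKbin : ∀ k : ℕ, 1 ≤ k →
      K₂ / Real.sqrt (2 * k) ≤ (Nat.choose (2 * k) k : ℝ) / 4 ^ k) :
    (∀ j : ℕ, 1 ≤ j → j ≤ N →
      (K₂ / (2 * n)) *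
          ((Finset.univ.filter fun ε : Fin M → Bool =>
              |Spart M a (j - 1) ε| ≤ (N : ℤ)).card : ℝ)
        ≤ ((Finset.univ.filter fun ε : Fin M → Bool =>
              |Spart M a j ε| ≤ (N : ℤ) ∧ |Spart M a (j - 1) ε| ≤ (N : ℤ)).card : ℝ)) ∧
    (K₂ / (2 * n)) ^ N * 2 ^ M ≤
      ((Finset.univ.filter fun ε : Fin M → Bool =>
          |Spart M a N ε| ≤ (N : ℤ)).card : ℝ) :=
  stmt2_general n N M hn a ha hcount K₂ hK₂0 hK₂1 hKbin
end
end

section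
/- (Cost of closing edges in the random-cluster model.) Let n ≥ 1, p ∈ (0,1), q ≥ 1, and let A be a set of configurations on E_n. Let H assign to each ω ∈ A a set of edges H(ω) ⊂ E_n with |H(ω)| ≤ N for all ω ∈ A, and let ψ(ω) = ω_{H(ω)}. Then φ^1_{n,p,q}(ψ(A)) ≥ φ^1_{n,p,q}(A) · [ (min(p, 1-p)) / (3 p |Λ(n)|) ]^N. -/
open scoped Classical BigOperators
open Finset

noncomputable section

/-- Edges with both endpoints in a given vertex set. -/
def EdgesOf (S : Finset V) : Finset (Sym2 V) :=
  ((S ×ˢ S).filter fun p => adjV p.1 p.2).image fun p => s(p.1, p.2)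

/-- The edge set `E_n` of the box `Λ(n)`. -/
def En (n : ℕ) : Finset (Sym2 V) := EdgesOf (Lam n)

/-- A percolation configuration: each edge is open (`true`) or closed (`false`). -/
abbrev Cfg := Sym2 V → Bool

/-- Open connectivity inside the box `Λ(n)`. -/
def openConn (n : ℕ) (ω : Cfg) (x y : V) : Prop :=
  Relation.ReflTransGen
    (fun a b => adjV a b ∧ a ∈ Lam n ∧ b ∈ Lam n ∧ ω s(a, b) = true) x y

/-- The open cluster of a vertex `x` in the box `Λ(n)`. -/
def cluster (n : ℕ) (ω : Cfg) (x : V) : Finset V :=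
  (Lam n).filter fun y => openConn n ω x y

/-- `M_n(ω)`: vertices connected to the boundary of the box by an open path. -/
def Mn (n : ℕ) (ω : Cfg) : Finset V :=
  (Lam n).filter fun x => ∃ y ∈ bdry n, openConn n ω x y

/-- The set of open clusters of the configuration. -/
def clusters (n : ℕ) (ω : Cfg) : Finset (Finset V) := (Lam n).image (cluster n ω)

/-- The set of open clusters not touching the boundary of the box. -/
def clustersMinus (n : ℕ) (ω : Cfg) : Finset (Finset V) :=
  ((Lam n).filter fun x => x ∉ Mn n ω).image (cluster n ω)

/-- Number of clusters with free boundary counting. -/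
def k0 (n : ℕ) (ω : Cfg) : ℕ := (clusters n ω).card

/-- Number of clusters with wired boundary counting. -/
def k1 (n : ℕ) (ω : Cfg) : ℕ := (clustersMinus n ω).card + 1

/-- The (finite) set of configurations supported on the edges of the box. -/
def CfgSet (n : ℕ) : Finset Cfg :=
  (Finset.univ : Finset ({e // e ∈ En n} → Bool)).image
    (fun f e => if h : e ∈ En n then f ⟨e, h⟩ else false)

/-- Cluster counting for boundary condition `ξ` (`true` = wired, `false` = free). -/
def kBC (ξ : Bool) (n : ℕ) (ω : Cfg) : ℕ := if ξ then k1 n ω else k0 n ω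

/-- Random-cluster weight of a configuration. -/
def rcWeight (n : ℕ) (p q : ℝ) (ξ : Bool) (ω : Cfg) : ℝ :=
  q ^ (kBC ξ n ω) * ∏ e ∈ En n, (if ω e then p else 1 - p)

/-- The random-cluster probability `φ^ξ_{n,p,q}(A)` of an event `A`. -/
def rcProb (n : ℕ) (p q : ℝ) (ξ : Bool) (A : Set Cfg) : ℝ :=
  (∑ ω ∈ (CfgSet n).filter (· ∈ A), rcWeight n p q ξ ω) /
    (∑ ω ∈ CfgSet n, rcWeight n p q ξ ω)

/-- The configuration obtained from `ω` by closing all the edges of `H`. -/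
def closeE (ω : Cfg) (H : Finset (Sym2 V)) : Cfg := fun e => if e ∈ H then false else ω e

/-! Closing the at most `N` edges of `H ω` can only split clusters, so with `q ≥ 1` the cluster
factor does not decrease, while each closed edge costs at most a factor `min(p, 1-p)/p` in the
Bernoulli product. A configuration `b ∈ ψ(A)` has at most `(|E_n| + 1)^N ≤ (3n²)^N` preimages,
because a preimage is determined by the set of at most `N` edges where it differs from `b`. -/

lemma openConn_mono {n : ℕ} {ω ω' : Cfg} (h : ω ≤ ω') {x y : V} (hxy : openConn n ω x y) :
    openConn n ω' x y :=
  Relation.ReflTransGen.mono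
    (fun _ _ ⟨hadj, ha, hb, he⟩ => ⟨hadj, ha, hb, h _ he⟩) _ _ hxy

lemma closeE_le (ω : Cfg) (H : Finset (Sym2 V)) : closeE ω H ≤ ω := fun e => by
  unfold closeE; split_ifs <;> simp

lemma Mn_mono {n : ℕ} {ω ω' : Cfg} (h : ω ≤ ω') : Mn n ω ⊆ Mn n ω' :=
  Finset.monotone_filter_right _ fun _ _ ⟨y, hy, hxy⟩ => ⟨y, hy, openConn_mono h hxy⟩

lemma cluster_eq_filter_exists_openConn {n : ℕ} {ω ω' : Cfg} (h : ω ≤ ω') {x : V}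
    (hx : x ∈ Lam n) :
    cluster n ω' x = (Lam n).filter fun y => ∃ z ∈ cluster n ω x, openConn n ω' z y := by
  ext y
  simp only [cluster, Finset.mem_filter]
  constructor
  · rintro ⟨hy, hxy⟩
    exact ⟨hy, x, ⟨hx, .refl⟩, hxy⟩
  · rintro ⟨hy, z, ⟨-, hxz⟩, hzy⟩
    exact ⟨hy, (openConn_mono h hxz).trans hzy⟩

lemma k1_antitone {n : ℕ} {ω ω' : Cfg} (h : ω ≤ ω') : k1 n ω' ≤ k1 n ω := by
  refine Nat.add_le_add_right (Finset.card_le_card_of_surjOn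
    (fun C => (Lam n).filter fun y => ∃ z ∈ C, openConn n ω' z y) ?_) 1
  intro C hC
  obtain ⟨x, hx, rfl⟩ := Finset.mem_image.mp hC
  rw [Finset.mem_filter] at hx
  exact ⟨cluster n ω x, Finset.mem_image_of_mem _
    (Finset.mem_filter.mpr ⟨hx.1, fun hM => hx.2 (Mn_mono h hM)⟩),
    (cluster_eq_filter_exists_openConn h hx.1).symm⟩

lemma mul_ite_le_ite_closeE {p : ℝ} (hp0 : 0 < p) (hp1 : p < 1) (ω : Cfg) (H : Finset (Sym2 V))
    (e : Sym2 V) :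
    (if e ∈ H then min p (1 - p) / p else 1) * (if ω e then p else 1 - p) ≤
      if closeE ω H e then p else 1 - p := by
  by_cases he : e ∈ H
  · have hc : min p (1 - p) / p ≤ 1 := div_le_one_of_le₀ (min_le_left _ _) hp0.le
    cases ω e
    · simp only [closeE, he, if_true, Bool.false_eq_true, if_false]
      exact mul_le_of_le_one_left (by linarith) hc
    · simp only [closeE, he, if_true, Bool.false_eq_true, if_false, div_mul_cancel₀ _ hp0.ne']
      exact min_le_right p (1 - p)
  · simp [closeE, he]

lemma pow_mul_prod_le_prod_closeE {p : ℝ} (hp0 : 0 < p) (hp1 : p < 1) (ω : Cfg)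
    (E H : Finset (Sym2 V)) {N : ℕ} (hH : H.card ≤ N) :
    (min p (1 - p) / p) ^ N * ∏ e ∈ E, (if ω e then p else 1 - p) ≤
      ∏ e ∈ E, (if closeE ω H e then p else 1 - p) := by
  have hc0 : 0 ≤ min p (1 - p) / p := div_nonneg (le_min hp0.le (by linarith)) hp0.le
  have hc1 : min p (1 - p) / p ≤ 1 := div_le_one_of_le₀ (min_le_left _ _) hp0.le
  have hcard : (E ∩ H).card ≤ N := (Finset.card_le_card Finset.inter_subset_right).trans hH
  calc (min p (1 - p) / p) ^ N * ∏ e ∈ E, (if ω e then p else 1 - p)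
      ≤ (min p (1 - p) / p) ^ (E ∩ H).card * ∏ e ∈ E, (if ω e then p else 1 - p) := by
        gcongr ?_ * _
        exact pow_le_pow_of_le_one hc0 hc1 hcard
    _ = ∏ e ∈ E, (if e ∈ H then min p (1 - p) / p else 1) * (if ω e then p else 1 - p) := by
        rw [Finset.prod_mul_distrib, Finset.prod_ite_mem, Finset.prod_const]
    _ ≤ ∏ e ∈ E, (if closeE ω H e then p else 1 - p) :=
        Finset.prod_le_prod (fun e _ => mul_nonneg (by split_ifs <;> linarith)
          (by split_ifs <;> linarith)) fun e _ => mul_ite_le_ite_closeE hp0 hp1 ω H e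

lemma rcWeight_pos {n : ℕ} {p q : ℝ} (hp0 : 0 < p) (hp1 : p < 1) (hq : 1 ≤ q) (ξ : Bool)
    (ω : Cfg) : 0 < rcWeight n p q ξ ω :=
  mul_pos (by positivity) (Finset.prod_pos fun e _ => by split_ifs <;> linarith)

lemma rcWeight_mul_le_rcWeight_closeE {n N : ℕ} {p q : ℝ} (hp0 : 0 < p) (hp1 : p < 1)
    (hq : 1 ≤ q) (ω : Cfg) {H : Finset (Sym2 V)} (hH : H.card ≤ N) :
    rcWeight n p q true ω * (min p (1 - p) / p) ^ N ≤ rcWeight n p q true (closeE ω H) := by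
  simp only [rcWeight, kBC, if_true]
  rw [mul_assoc, mul_comm (∏ e ∈ En n, _)]
  exact mul_le_mul (pow_le_pow_right₀ hq (k1_antitone (closeE_le ω H)))
    (pow_mul_prod_le_prod_closeE hp0 hp1 ω (En n) H hH)
    (mul_nonneg (by positivity) (Finset.prod_nonneg fun e _ => by split_ifs <;> linarith))
    (by positivity)

lemma mem_CfgSet_iff {n : ℕ} {ω : Cfg} : ω ∈ CfgSet n ↔ ∀ e ∉ En n, ω e = false := by
  simp only [CfgSet, Finset.mem_image, Finset.mem_univ, true_and]
  constructor
  · rintro ⟨f, rfl⟩ e he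
    simp [he]
  · intro h
    refine ⟨fun e => ω e.1, funext fun e => ?_⟩
    by_cases he : e ∈ En n <;> simp [he, h]

lemma closeE_mem_CfgSet {n : ℕ} {ω : Cfg} (hω : ω ∈ CfgSet n) (H : Finset (Sym2 V)) :
    closeE ω H ∈ CfgSet n :=
  mem_CfgSet_iff.mpr fun e he => by
    unfold closeE; split_ifs <;> simp [mem_CfgSet_iff.mp hω e he]

lemma eq_of_filter_ne_eq {n : ℕ} {ω₁ ω₂ b : Cfg} (h₁ : ω₁ ∈ CfgSet n) (h₂ : ω₂ ∈ CfgSet n)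
    (h : (En n).filter (fun e => ω₁ e ≠ b e) = (En n).filter (fun e => ω₂ e ≠ b e)) :
    ω₁ = ω₂ := by
  funext e
  by_cases he : e ∈ En n
  · have hiff : ω₁ e ≠ b e ↔ ω₂ e ≠ b e := by
      simpa [he] using congrArg (e ∈ ·) h
    revert hiff
    generalize ω₁ e = x, ω₂ e = y, b e = c
    decide +revert
  · rw [mem_CfgSet_iff.mp h₁ e he, mem_CfgSet_iff.mp h₂ e he]

lemma sum_range_choose_le_pow (m N : ℕ) :
    ∑ k ∈ Finset.range (N + 1), m.choose k ≤ (m + 1) ^ N := by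
  rw [add_pow]
  refine Finset.sum_le_sum fun k hk => ?_
  rw [one_pow, mul_one]
  exact (Nat.choose_le_pow m k).trans
    (Nat.le_mul_of_pos_right _ (Nat.choose_pos (Nat.lt_succ_iff.mp (Finset.mem_range.mp hk))))

lemma card_filter_powerset_card_le {α : Type*} (s : Finset α) (N : ℕ) :
    (s.powerset.filter fun S => S.card ≤ N).card ≤ (s.card + 1) ^ N := by
  classical
  calc (s.powerset.filter fun S => S.card ≤ N).card
      ≤ ((Finset.range (N + 1)).biUnion fun k => s.powersetCard k).card := by
        refine Finset.card_le_card fun S hS => ?_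
        rw [Finset.mem_filter, Finset.mem_powerset] at hS
        exact Finset.mem_biUnion.mpr ⟨S.card, Finset.mem_range.mpr (Nat.lt_succ_of_le hS.2),
          Finset.mem_powersetCard.mpr ⟨hS.1, rfl⟩⟩
    _ ≤ ∑ k ∈ Finset.range (N + 1), (s.powersetCard k).card := Finset.card_biUnion_le
    _ ≤ (s.card + 1) ^ N := by
        simpa only [Finset.card_powersetCard] using sum_range_choose_le_pow s.card N

lemma card_Lam (n : ℕ) : (Lam n).card = n ^ 2 := by
  rw [Lam, Finset.card_product, Int.card_Ico, sub_neg_eq_add, sub_add_cancel,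
    Int.toNat_natCast, sq]

lemma card_En_le (n : ℕ) : (En n).card ≤ 2 * n ^ 2 := by
  let D : Finset V := {(1, 0), (0, 1)}
  have hsub : En n ⊆ (Lam n ×ˢ D).image fun ud => s(ud.1, ud.1 + ud.2) := by
    simp only [En, EdgesOf, Finset.image_subset_iff, Finset.mem_filter, Finset.mem_product]
    rintro ⟨a, b⟩ ⟨⟨ha, hb⟩, hab⟩
    simp only [adjV] at hab
    by_cases hd : b - a ∈ D
    · exact Finset.mem_image.mpr ⟨(a, b - a), Finset.mem_product.mpr ⟨ha, hd⟩, by simp⟩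
    · have hd' : a - b ∈ D := by
        simp only [D, Finset.mem_insert, Finset.mem_singleton, Prod.ext_iff, Prod.fst_sub,
          Prod.snd_sub] at hd ⊢
        omega
      exact Finset.mem_image.mpr ⟨(b, a - b), Finset.mem_product.mpr ⟨hb, hd'⟩,
        by simp [Sym2.eq_swap]⟩
  calc (En n).card ≤ (Lam n ×ˢ D).card :=
        (Finset.card_le_card hsub).trans Finset.card_image_le
    _ ≤ 2 * n ^ 2 := by
        rw [Finset.card_product, card_Lam, mul_comm]
        exact Nat.mul_le_mul_right _ (Finset.card_le_two)

lemma card_fiber_closeE_le {n N : ℕ} {T : Finset Cfg} (hT : T ⊆ CfgSet n)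
    {H : Cfg → Finset (Sym2 V)} (hH : ∀ ω ∈ T, (H ω).card ≤ N) (b : Cfg) :
    (T.filter fun ω => closeE ω (H ω) = b).card ≤ ((En n).card + 1) ^ N := by
  refine le_trans (Finset.card_le_card_of_injOn (fun ω => (En n).filter fun e => ω e ≠ b e)
    (fun ω hω => ?_) fun ω₁ hω₁ ω₂ hω₂ h => ?_) (card_filter_powerset_card_le (En n) N)
  · obtain ⟨hωT, rfl⟩ := Finset.mem_filter.mp hω
    have hdiff : ((En n).filter fun e => ω e ≠ closeE ω (H ω) e) ⊆ H ω := fun e he => by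
      by_contra heH
      exact (Finset.mem_filter.mp he).2 (by simp [closeE, heH])
    exact Finset.mem_filter.mpr ⟨Finset.mem_powerset.mpr (Finset.filter_subset _ _),
      (Finset.card_le_card hdiff).trans (hH ω hωT)⟩
  · exact eq_of_filter_ne_eq (hT (Finset.mem_filter.mp hω₁).1)
      (hT (Finset.mem_filter.mp hω₂).1) h

lemma sum_comp_le_mul_sum_image {α β R : Type*} [DecidableEq β] [Semiring R] [PartialOrder R]
    [IsOrderedRing R] {s : Finset α} {g : α → β} {f : β → R} (hf : ∀ b, 0 ≤ f b) {K : ℕ}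
    (hK : ∀ b ∈ s.image g, (s.filter fun a => g a = b).card ≤ K) :
    ∑ a ∈ s, f (g a) ≤ K * ∑ b ∈ s.image g, f b := by
  rw [Finset.sum_comp, Finset.mul_sum]
  exact Finset.sum_le_sum fun b hb => by
    rw [nsmul_eq_mul]
    exact mul_le_mul_of_nonneg_right (Nat.mono_cast (hK b hb)) (hf b)

theorem stmt13_general (n : ℕ) (hn : 1 ≤ n) (p q : ℝ) (hp0 : 0 < p) (hp1 : p < 1) (hq : 1 ≤ q)
    (N : ℕ) (A : Set Cfg)
    (H : Cfg → Finset (Sym2 V))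
    (hHcard : ∀ ω ∈ A, (H ω).card ≤ N) :
    rcProb n p q true A * (min p (1 - p) / (3 * p * (n : ℝ) ^ 2)) ^ N
      ≤ rcProb n p q true ((fun ω => closeE ω (H ω)) '' A) := by
  set ψ : Cfg → Cfg := fun ω => closeE ω (H ω)
  set T := (CfgSet n).filter (· ∈ A)
  set w := rcWeight n p q true
  have hw : ∀ ω, 0 ≤ w ω := fun ω => (rcWeight_pos hp0 hp1 hq true ω).le
  have hfiber : ∀ b ∈ T.image ψ, (T.filter fun ω => ψ ω = b).card ≤ (3 * n ^ 2) ^ N :=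
    fun b _ => (card_fiber_closeE_le (Finset.filter_subset _ _)
      (fun ω hω => hHcard ω (Finset.mem_filter.mp hω).2) b).trans
      (Nat.pow_le_pow_left (by have := card_En_le n; nlinarith) N)
  have himage : T.image ψ ⊆ (CfgSet n).filter (· ∈ ψ '' A) := fun b hb => by
    obtain ⟨ω, hω, rfl⟩ := Finset.mem_image.mp hb
    obtain ⟨hωC, hωA⟩ := Finset.mem_filter.mp hω
    exact Finset.mem_filter.mpr ⟨closeE_mem_CfgSet hωC _, ω, hωA, rfl⟩
  have hnum : (∑ ω ∈ T, w ω) * (min p (1 - p) / (3 * p * (n : ℝ) ^ 2)) ^ N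
      ≤ ∑ b ∈ (CfgSet n).filter (· ∈ ψ '' A), w b := by
    have hK : (0 : ℝ) < (3 * (n : ℝ) ^ 2) ^ N := by positivity
    calc (∑ ω ∈ T, w ω) * (min p (1 - p) / (3 * p * (n : ℝ) ^ 2)) ^ N
        = (∑ ω ∈ T, w ω * (min p (1 - p) / p) ^ N) / (3 * (n : ℝ) ^ 2) ^ N := by
          rw [← Finset.sum_mul, mul_div_assoc, ← div_pow, div_div]
          ring
      _ ≤ (∑ ω ∈ T, w (ψ ω)) / (3 * (n : ℝ) ^ 2) ^ N := by
          gcongr with ω hω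
          exact rcWeight_mul_le_rcWeight_closeE hp0 hp1 hq ω
            (hHcard ω (Finset.mem_filter.mp hω).2)
      _ ≤ ∑ b ∈ T.image ψ, w b := by
          rw [div_le_iff₀ hK, mul_comm]
          exact_mod_cast sum_comp_le_mul_sum_image hw hfiber
      _ ≤ ∑ b ∈ (CfgSet n).filter (· ∈ ψ '' A), w b :=
          Finset.sum_le_sum_of_subset_of_nonneg himage fun b _ _ => hw b
  rw [rcProb, rcProb, div_mul_eq_mul_div]
  exact div_le_div_of_nonneg_right hnum (Finset.sum_nonneg fun ω _ => hw ω)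

/-- Cost of closing edges in the random-cluster model: if `H` assigns to each
configuration `ω ∈ A` a set of at most `N` edges of the box, and `ψ(ω) = ω_{H(ω)}`,
then `φ¹_{n,p,q}(ψ(A)) ≥ φ¹_{n,p,q}(A)·[min(p,1-p)/(3p|Λ(n)|)]^N` with `|Λ(n)| = n²`. -/
theorem stmt13 (n : ℕ) (hn : 1 ≤ n) (p q : ℝ) (hp0 : 0 < p) (hp1 : p < 1) (hq : 1 ≤ q)
    (N : ℕ) (A : Set Cfg) (hA : A ⊆ ↑(CfgSet n))
    (H : Cfg → Finset (Sym2 V))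
    (hHsub : ∀ ω ∈ A, H ω ⊆ En n) (hHcard : ∀ ω ∈ A, (H ω).card ≤ N) :
    rcProb n p q true A * (min p (1 - p) / (3 * p * (n : ℝ) ^ 2)) ^ N
      ≤ rcProb n p q true ((fun ω => closeE ω (H ω)) '' A) :=
  stmt13_general n hn p q hp0 hp1 hq N A H hHcard

end
end
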